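/- Let k ≥ 1 be an integer. For every p ∈ [−∞, 2] the p-mean ⟨·⟩_p : ℝ^k → [0,∞) is Schur²-concave, and for every p ∈ [2, ∞] the p-mean ⟨·⟩_p is Schur²-convex. -/

import Mathlib

open MeasureTheory ProbabilityTheory Filter
open scoped ENNReal

noncomputable section

/-- The standard Gaussian measure on `ℝ^k` (the `k`-fold product of `N(0,1)`). -/
def stdGaussianPi (k : ℕ) : MeasureTheory.Measure (Fin k → ℝ) :=
  MeasureTheory.Measure.pi fun _ => ProbabilityTheory.gaussianReal 0 1

/-- `a` majorizes `b`: the total sums agree and, for every `j`, the sum of the `j`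
largest entries of `a` is at least the sum of the `j` largest entries of `b`
(formulated equivalently: every sum of entries of `b` over an index set is dominated by
a sum of entries of `a` over an index set of the same cardinality). -/
def Majorizes {k : ℕ} (a b : Fin k → ℝ) : Prop :=
  (∑ i, a i = ∑ i, b i) ∧
  ∀ s : Finset (Fin k), ∃ t : Finset (Fin k),
    t.card = s.card ∧ ∑ i ∈ s, b i ≤ ∑ i ∈ t, a i

/-- The coordinatewise square `x² = (x₁², …, x_k²)` of a vector. -/
def sqv {k : ℕ} (x : Fin k → ℝ) : Fin k → ℝ := fun i => (x i) ^ 2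

/-- `f` is Schur²-concave: `f x ≤ f y` whenever `x²` majorizes `y²`. -/
def Schur2Concave {k : ℕ} {α : Type*} [Preorder α] (f : (Fin k → ℝ) → α) : Prop :=
  ∀ x y : Fin k → ℝ, Majorizes (sqv x) (sqv y) → f x ≤ f y

/-- `f` is Schur²-convex: `f x ≥ f y` whenever `x²` majorizes `y²`. -/
def Schur2Convex {k : ℕ} {α : Type*} [Preorder α] (f : (Fin k → ℝ) → α) : Prop :=
  ∀ x y : Fin k → ℝ, Majorizes (sqv x) (sqv y) → f y ≤ f x

/-- A set `A` is Schur²-convex if `x ∈ A` and `y² ⪯ x²` imply `y ∈ A`. -/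
def Schur2ConvexSet {k : ℕ} (A : Set (Fin k → ℝ)) : Prop :=
  ∀ x y : Fin k → ℝ, x ∈ A → Majorizes (sqv x) (sqv y) → y ∈ A

/-- A set `A` is Schur²-concave if `x ∈ A` and `y² ⪰ x²` imply `y ∈ A`. -/
def Schur2ConcaveSet {k : ℕ} (A : Set (Fin k → ℝ)) : Prop :=
  ∀ x y : Fin k → ℝ, x ∈ A → Majorizes (sqv y) (sqv x) → y ∈ A

open Classical in
/-- The `p`-mean `⟨x⟩_p` for `p ∈ [-∞, ∞]` (coded as `p : EReal`):
`⟨x⟩_p = ((1/k) ∑ |x_j|^p)^(1/p)` for real `p ≠ 0`, with `⟨x⟩_p := 0` when `p < 0` and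
some `x_j = 0`; `⟨x⟩_0 = ∏ |x_j|^(1/k)`; `⟨x⟩_∞ = max |x_j|`; `⟨x⟩_{-∞} = min |x_j|`. -/
noncomputable def pMean {k : ℕ} (p : EReal) (x : Fin k → ℝ) : ℝ :=
  if p = ⊤ then ⨆ j, |x j|
  else if p = ⊥ then ⨅ j, |x j|
  else if p = 0 then ∏ j, |x j| ^ ((k : ℝ)⁻¹)
  else if p.toReal < 0 ∧ ∃ j, x j = 0 then 0
  else ((k : ℝ)⁻¹ * ∑ j, |x j| ^ p.toReal) ^ (p.toReal)⁻¹

/-!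
Every comparison reduces to Karamata's inequality applied to the squared entries: since
`|x|^p = (x²)^(p/2)`, the power sums `∑ |x_j|^p` are sums of the convex function `t ↦ t^(p/2)`
for `p ≥ 2` or `p < 0`, of the concave one for `0 < p ≤ 2`, and `log` handles the geometric mean;
the cases `p = ±∞` compare the smallest (largest) entries directly.

Karamata's inequality itself reduces to hinge functions: majorization of `b` by `a` gives
`∑ (b_i - u)⁺ ≤ ∑ (a_i - u)⁺` for every `u`, and on any finite set a convex function agrees with
an affine function plus a nonnegative combination of hinges `t ↦ (t - u)⁺`: adding the points in
increasing order, each new hinge coefficient is the difference of two consecutive chord slopes.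
-/

open Finset

section Majorization

variable {k : ℕ} {a b : Fin k → ℝ}

theorem Majorizes.sum_max_sub_le (h : Majorizes a b) (u : ℝ) :
    ∑ i, max (b i - u) 0 ≤ ∑ i, max (a i - u) 0 := by
  classical
  obtain ⟨t, hts, hbt⟩ := h.2 {i | u < b i}
  calc ∑ i, max (b i - u) 0 = ∑ i ∈ {i | u < b i}, (b i - u) := by
        rw [sum_filter]
        refine sum_congr rfl fun i _ => ?_
        split_ifs with hi
        · exact max_eq_left (sub_nonneg.2 hi.le)
        · exact max_eq_right (sub_nonpos.2 (not_lt.1 hi))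
    _ ≤ ∑ i ∈ t, (a i - u) := by simpa [sum_sub_distrib, hts] using hbt
    _ ≤ ∑ i ∈ t, max (a i - u) 0 := sum_le_sum fun i _ => le_max_left _ _
    _ ≤ ∑ i, max (a i - u) 0 :=
        sum_le_sum_of_subset_of_nonneg (subset_univ t) fun i _ _ => le_max_right _ _

theorem Majorizes.exists_le (h : Majorizes a b) (j : Fin k) : ∃ i, a i ≤ b j := by
  classical
  obtain ⟨t, ht, hbt⟩ := h.2 (univ.erase j)
  obtain ⟨i, hi⟩ : ∃ i, tᶜ = {i} := by
    rw [← card_eq_one, card_compl, ht, card_erase_of_mem (mem_univ j), card_univ]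
    have := j.pos
    simp only [Fintype.card_fin]; omega
  refine ⟨i, ?_⟩
  have hb := sum_erase_add univ b (mem_univ j)
  have ha := sum_add_sum_compl t a
  rw [hi, sum_singleton] at ha
  linarith [h.1]

theorem Majorizes.exists_ge (h : Majorizes a b) (j : Fin k) : ∃ i, b j ≤ a i := by
  obtain ⟨t, ht, hbt⟩ := h.2 {j}
  obtain ⟨i, rfl⟩ := card_eq_one.1 (ht.trans (card_singleton j))
  exact ⟨i, by simpa using hbt⟩

end Majorization

section SchurConvexSum

variable {k : ℕ}

variable (k) in
def SchurConvexSum (φ : ℝ → ℝ) : Prop :=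
  ∀ a b : Fin k → ℝ, Majorizes a b → ∑ i, φ (b i) ≤ ∑ i, φ (a i)

theorem schurConvexSum_affine (α β γ : ℝ) : SchurConvexSum k fun t => α + β * (t - γ) := by
  intro a b h
  simp only [sum_add_distrib, ← mul_sum, sum_sub_distrib, h.1, le_refl]

theorem schurConvexSum_max_sub (u : ℝ) : SchurConvexSum k fun t => max (t - u) 0 :=
  fun _ _ h => h.sum_max_sub_le u

theorem SchurConvexSum.add {φ ψ : ℝ → ℝ} (hφ : SchurConvexSum k φ) (hψ : SchurConvexSum k ψ) :
    SchurConvexSum k fun t => φ t + ψ t := fun a b h => by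
  simpa only [sum_add_distrib] using add_le_add (hφ a b h) (hψ a b h)

theorem SchurConvexSum.const_mul {φ : ℝ → ℝ} (hφ : SchurConvexSum k φ) {c : ℝ} (hc : 0 ≤ c) :
    SchurConvexSum k fun t => c * φ t := fun a b h => by
  simpa only [← mul_sum] using mul_le_mul_of_nonneg_left (hφ a b h) hc

end SchurConvexSum

section Karamata

variable {k : ℕ} {a b : Fin k → ℝ} {S : Set ℝ} {g : ℝ → ℝ}

theorem add_slope_mul_sub_eq (g : ℝ → ℝ) (a b t : ℝ) :
    g a + slope g a b * (t - a) = g b + slope g a b * (t - b) := by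
  have h := sub_smul_slope g a b
  rw [smul_eq_mul, vsub_eq_sub] at h
  linear_combination h

theorem add_hinge_eq_of_eq_chord {φ : ℝ → ℝ} {q p m t : ℝ} (hpm : p ≤ m)
    (hφ : ∀ t, p ≤ t → φ t = g p + slope g q p * (t - p)) (ht : m ≤ t) :
    φ t + (slope g p m - slope g q p) * max (t - p) 0 = g m + slope g p m * (t - m) := by
  rw [hφ t (hpm.trans ht), max_eq_left (by linarith)]
  linear_combination add_slope_mul_sub_eq g p m t

-- The last conjunct is the induction invariant that makes each new hinge coefficient nonnegative.
theorem ConvexOn.exists_schurConvexSum_eqOn (hg : ConvexOn ℝ S g)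
    (P : Finset ℝ) (hP : ↑P ⊆ S) :
    ∃ φ, SchurConvexSum k φ ∧ Set.EqOn φ g P ∧
      ∀ p ∈ P, (∀ x ∈ P, x ≤ p) → P.Nontrivial →
        ∃ q ∈ S, q < p ∧ ∀ t, p ≤ t → φ t = g p + slope g q p * (t - p) := by
  classical
  induction P using Finset.induction_on_max with
  | empty => exact ⟨fun t => 0 + 0 * (t - 0), schurConvexSum_affine 0 0 0, by simp, by simp⟩
  | insert m P hPm ih =>
    rw [coe_insert, Set.insert_subset_iff] at hP
    obtain ⟨hmS, hPS⟩ := hP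
    have hmax : ∀ p ∈ insert m P, (∀ x ∈ insert m P, x ≤ p) → p = m := fun p hp hpmax => by
      rcases mem_insert.1 hp with rfl | hp
      · rfl
      · exact absurd (hpmax m (mem_insert_self m P)) (not_le.2 (hPm p hp))
    suffices ∃ φ, SchurConvexSum k φ ∧ Set.EqOn φ g ↑(insert m P) ∧ ((insert m P).Nontrivial →
        ∃ q ∈ S, q < m ∧ ∀ t, m ≤ t → φ t = g m + slope g q m * (t - m)) by
      obtain ⟨φ, hφ, hφg, hφm⟩ := this
      exact ⟨φ, hφ, hφg, fun p hp hpmax => hmax p hp hpmax ▸ hφm⟩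
    rcases P.eq_empty_or_nonempty with rfl | hne
    · exact ⟨fun t => g m + 0 * (t - m), schurConvexSum_affine _ _ _, by simp, by simp⟩
    rcases hne.exists_eq_singleton_or_nontrivial with ⟨q, rfl⟩ | hnt
    · refine ⟨fun t => g m + slope g q m * (t - m), schurConvexSum_affine _ _ _, ?_,
        fun _ => ⟨q, hPS (mem_singleton_self q), hPm q (mem_singleton_self q), fun t _ => rfl⟩⟩
      intro x hx
      rcases mem_insert.1 hx with rfl | hx
      · simp
      · simpa [mem_singleton.1 hx] using (add_slope_mul_sub_eq g q m q).symm
    · obtain ⟨p, hpP, hpmax⟩ : ∃ p ∈ P, ∀ x ∈ P, x ≤ p :=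
        ⟨P.max' hne, P.max'_mem hne, fun x hx => P.le_max' x hx⟩
      have hpm : p < m := hPm p hpP
      obtain ⟨φ, hφ, hφg, hφp⟩ := ih hPS
      obtain ⟨q, hqS, hqp, hφaff⟩ := hφp p hpP hpmax hnt
      have hslope : slope g q p ≤ slope g p m := by
        simpa only [slope_def_field] using hg.slope_mono_adjacent hqS hmS hqp hpm
      refine ⟨fun t => φ t + (slope g p m - slope g q p) * max (t - p) 0,
        hφ.add ((schurConvexSum_max_sub p).const_mul (sub_nonneg.2 hslope)), ?_,
        fun _ => ⟨p, hPS hpP, hpm, fun t ht => add_hinge_eq_of_eq_chord hpm.le hφaff ht⟩⟩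
      intro x hx
      rcases mem_insert.1 hx with rfl | hx
      · simpa using add_hinge_eq_of_eq_chord hpm.le hφaff le_rfl
      · simp only [max_eq_right (sub_nonpos.2 (hpmax x hx)), mul_zero, add_zero, hφg hx]

theorem Majorizes.sum_le_sum_of_convexOn (h : Majorizes a b) (hg : ConvexOn ℝ S g)
    (ha : ∀ i, a i ∈ S) (hb : ∀ i, b i ∈ S) : ∑ i, g (b i) ≤ ∑ i, g (a i) := by
  classical
  obtain ⟨φ, hφ, hφg, -⟩ := hg.exists_schurConvexSum_eqOn (k := k)
    (univ.image a ∪ univ.image b) (by simpa [Set.range_subset_iff] using ⟨ha, hb⟩)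
  calc ∑ i, g (b i) = ∑ i, φ (b i) := sum_congr rfl fun i _ => (hφg (by simp)).symm
    _ ≤ ∑ i, φ (a i) := hφ a b h
    _ = ∑ i, g (a i) := sum_congr rfl fun i _ => hφg (by simp)

theorem Majorizes.sum_le_sum_of_concaveOn (h : Majorizes a b) (hg : ConcaveOn ℝ S g)
    (ha : ∀ i, a i ∈ S) (hb : ∀ i, b i ∈ S) : ∑ i, g (a i) ≤ ∑ i, g (b i) := by
  simpa using h.sum_le_sum_of_convexOn hg.neg ha hb

end Karamata

theorem convexOn_rpow_Ioi_of_nonpos {r : ℝ} (hr : r ≤ 0) :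
    ConvexOn ℝ (Set.Ioi 0) fun t : ℝ => t ^ r := by
  refine ⟨convex_Ioi 0, fun x (hx : 0 < x) y (hy : 0 < y) a b ha hb hab => ?_⟩
  have hamgm := Real.geom_mean_le_arith_mean2_weighted ha hb hx.le hy.le hab
  have hamgm_r := Real.geom_mean_le_arith_mean2_weighted ha hb
    (Real.rpow_nonneg hx.le r) (Real.rpow_nonneg hy.le r) hab
  calc (a • x + b • y) ^ r ≤ (x ^ a * y ^ b) ^ r :=
        Real.rpow_le_rpow_of_nonpos (by positivity) hamgm hr
    _ = (x ^ r) ^ a * (y ^ r) ^ b := by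
        rw [Real.mul_rpow (by positivity) (by positivity), ← Real.rpow_mul hx.le,
          ← Real.rpow_mul hy.le, ← Real.rpow_mul hx.le, ← Real.rpow_mul hy.le, mul_comm a,
          mul_comm b]
    _ ≤ a • x ^ r + b • y ^ r := hamgm_r

theorem abs_rpow_eq_sq_rpow_half (x q : ℝ) : |x| ^ q = (x ^ 2) ^ (q / 2) := by
  rw [← sq_abs, ← Real.rpow_natCast_mul (abs_nonneg x), Nat.cast_ofNat,
    mul_div_cancel₀ q two_ne_zero]

section SchurSquare

variable {k : ℕ} {x y : Fin k → ℝ}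

theorem Majorizes.sum_abs_rpow_le_of_le_two (h : Majorizes (sqv x) (sqv y)) {q : ℝ}
    (hq₀ : 0 ≤ q) (hq₂ : q ≤ 2) : ∑ i, |x i| ^ q ≤ ∑ i, |y i| ^ q := by
  simp only [abs_rpow_eq_sq_rpow_half]
  exact h.sum_le_sum_of_concaveOn (Real.concaveOn_rpow (by linarith) (by linarith))
    (fun i => sq_nonneg (x i)) (fun i => sq_nonneg (y i))

theorem Majorizes.sum_abs_rpow_le_of_two_le (h : Majorizes (sqv x) (sqv y)) {q : ℝ}
    (hq : 2 ≤ q) : ∑ i, |y i| ^ q ≤ ∑ i, |x i| ^ q := by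
  simp only [abs_rpow_eq_sq_rpow_half]
  exact h.sum_le_sum_of_convexOn (convexOn_rpow (by linarith))
    (fun i => sq_nonneg (x i)) (fun i => sq_nonneg (y i))

theorem Majorizes.sum_abs_rpow_le_of_nonpos (h : Majorizes (sqv x) (sqv y)) {q : ℝ}
    (hq : q ≤ 0) (hx : ∀ i, x i ≠ 0) (hy : ∀ i, y i ≠ 0) :
    ∑ i, |y i| ^ q ≤ ∑ i, |x i| ^ q := by
  simp only [abs_rpow_eq_sq_rpow_half]
  exact h.sum_le_sum_of_convexOn (convexOn_rpow_Ioi_of_nonpos (by linarith))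
    (fun i => sq_pos_of_ne_zero (hx i)) (fun i => sq_pos_of_ne_zero (hy i))

theorem Majorizes.sum_log_abs_le (h : Majorizes (sqv x) (sqv y)) (hx : ∀ i, x i ≠ 0)
    (hy : ∀ i, y i ≠ 0) : ∑ i, Real.log |x i| ≤ ∑ i, Real.log |y i| := by
  have := h.sum_le_sum_of_concaveOn strictConcaveOn_log_Ioi.concaveOn
    (fun i => sq_pos_of_ne_zero (hx i)) (fun i => sq_pos_of_ne_zero (hy i))
  simpa [sqv, Real.log_pow, ← mul_sum, Real.log_abs] using this

theorem Majorizes.forall_ne_zero (h : Majorizes (sqv x) (sqv y)) (hx : ∀ i, x i ≠ 0)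
    (j : Fin k) : y j ≠ 0 := by
  intro hyj
  obtain ⟨i, hi⟩ := h.exists_le j
  simp only [sqv, hyj] at hi
  exact hx i (pow_eq_zero_iff two_ne_zero |>.1 (le_antisymm (by simpa using hi) (sq_nonneg _)))

end SchurSquare

section PMean

variable {k : ℕ} {x y : Fin k → ℝ}

theorem pMean_nonneg (p : EReal) (x : Fin k → ℝ) : 0 ≤ pMean p x := by
  unfold pMean
  split_ifs
  · exact Real.iSup_nonneg fun j => abs_nonneg (x j)
  · exact Real.iInf_nonneg fun j => abs_nonneg (x j)
  all_goals positivity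

theorem pMean_coe_of_pos {q : ℝ} (hq : 0 < q) (x : Fin k → ℝ) :
    pMean (q : EReal) x = ((k : ℝ)⁻¹ * ∑ j, |x j| ^ q) ^ q⁻¹ := by
  simp [pMean, hq.ne', hq.not_gt]

theorem pMean_coe_of_neg {q : ℝ} (hq : q < 0) (hx : ∀ j, x j ≠ 0) :
    pMean (q : EReal) x = ((k : ℝ)⁻¹ * ∑ j, |x j| ^ q) ^ q⁻¹ := by
  simp [pMean, hq.ne, hx]

theorem pMean_coe_of_neg_of_eq_zero {q : ℝ} (hq : q < 0) {j : Fin k} (hj : x j = 0) :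
    pMean (q : EReal) x = 0 := by
  simp [pMean, hq.ne, hq, show ∃ j, x j = 0 from ⟨j, hj⟩]

theorem Majorizes.iInf_abs_le [Nonempty (Fin k)] (h : Majorizes (sqv x) (sqv y)) :
    ⨅ j, |x j| ≤ ⨅ j, |y j| := by
  refine le_ciInf fun j => ?_
  obtain ⟨i, hi⟩ := h.exists_le j
  exact (ciInf_le (Finite.bddBelow_range _) i).trans (sq_le_sq.1 hi)

theorem Majorizes.iSup_abs_le [Nonempty (Fin k)] (h : Majorizes (sqv x) (sqv y)) :
    ⨆ j, |y j| ≤ ⨆ j, |x j| := by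
  refine ciSup_le fun j => ?_
  obtain ⟨i, hi⟩ := h.exists_ge j
  exact (sq_le_sq.1 hi).trans (le_ciSup (f := fun j => |x j|) (Finite.bddAbove_range _) i)

theorem Majorizes.prod_abs_rpow_le (h : Majorizes (sqv x) (sqv y)) {r : ℝ} (hr : 0 < r) :
    ∏ j, |x j| ^ r ≤ ∏ j, |y j| ^ r := by
  by_cases hx : ∀ j, x j ≠ 0
  · have hy := h.forall_ne_zero hx
    rw [Real.finsetProd_rpow _ _ (fun j _ => abs_nonneg (x j)),
      Real.finsetProd_rpow _ _ (fun j _ => abs_nonneg (y j))]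
    refine Real.rpow_le_rpow (by positivity) ?_ hr.le
    rw [← Real.log_le_log_iff (prod_pos fun j _ => abs_pos.2 (hx j))
      (prod_pos fun j _ => abs_pos.2 (hy j)), Real.log_prod (fun j _ => abs_ne_zero.2 (hx j)),
      Real.log_prod (fun j _ => abs_ne_zero.2 (hy j))]
    exact h.sum_log_abs_le hx hy
  · push Not at hx
    obtain ⟨j, hj⟩ := hx
    rw [prod_eq_zero (mem_univ j) (by rw [hj, abs_zero, Real.zero_rpow hr.ne'])]
    positivity

end PMean

section PMeanSchur

variable {k : ℕ} {x y : Fin k → ℝ} [Nonempty (Fin k)]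

theorem Majorizes.pMean_le_of_le_two (h : Majorizes (sqv x) (sqv y)) {p : EReal} (hp : p ≤ 2) :
    pMean p x ≤ pMean p y := by
  induction p using EReal.rec with
  | bot => simpa [pMean] using h.iInf_abs_le
  | top => exact absurd hp (by decide)
  | coe q =>
    have hq₂ : q ≤ 2 := EReal.coe_le_coe_iff.1 hp
    have hk : 0 < (k : ℝ)⁻¹ := inv_pos.2 (Nat.cast_pos.2 Fin.pos')
    rcases lt_trichotomy q 0 with hq | rfl | hq
    · by_cases hx : ∀ j, x j ≠ 0
      · have hy := h.forall_ne_zero hx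
        have hy_pos : 0 < (k : ℝ)⁻¹ * ∑ j, |y j| ^ q :=
          mul_pos hk (sum_pos (fun j _ => Real.rpow_pos_of_pos (abs_pos.2 (hy j)) q) univ_nonempty)
        rw [pMean_coe_of_neg hq hx, pMean_coe_of_neg hq hy]
        exact Real.rpow_le_rpow_of_nonpos hy_pos
          (mul_le_mul_of_nonneg_left (h.sum_abs_rpow_le_of_nonpos hq.le hx hy) hk.le)
          (inv_nonpos.2 hq.le)
      · push Not at hx
        obtain ⟨j, hj⟩ := hx
        exact (pMean_coe_of_neg_of_eq_zero hq hj).trans_le (pMean_nonneg _ _)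
    · simpa [pMean] using h.prod_abs_rpow_le hk
    · rw [pMean_coe_of_pos hq, pMean_coe_of_pos hq]
      exact Real.rpow_le_rpow (by positivity)
        (mul_le_mul_of_nonneg_left (h.sum_abs_rpow_le_of_le_two hq.le hq₂) hk.le)
        (inv_nonneg.2 hq.le)

theorem Majorizes.pMean_le_of_two_le (h : Majorizes (sqv x) (sqv y)) {p : EReal} (hp : 2 ≤ p) :
    pMean p y ≤ pMean p x := by
  induction p using EReal.rec with
  | bot => exact absurd hp (by decide)
  | top => simpa [pMean] using h.iSup_abs_le
  | coe q =>
    have hq : 2 ≤ q := EReal.coe_le_coe_iff.1 hp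
    rw [pMean_coe_of_pos (by linarith), pMean_coe_of_pos (by linarith)]
    exact Real.rpow_le_rpow (by positivity)
      (mul_le_mul_of_nonneg_left (h.sum_abs_rpow_le_of_two_le hq) (by positivity))
      (inv_nonneg.2 (by linarith))

end PMeanSchur

/-- The `p`-mean is Schur²-concave for `p ∈ [-∞,2]` and Schur²-convex for `p ∈ [2,∞]`. -/
theorem pMean_schur2 (k : ℕ) (hk : 1 ≤ k) :
    (∀ p : EReal, p ≤ 2 → Schur2Concave (fun x : Fin k → ℝ => pMean p x)) ∧
    (∀ p : EReal, 2 ≤ p → Schur2Convex (fun x : Fin k → ℝ => pMean p x)) := by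
  have : Nonempty (Fin k) := ⟨⟨0, hk⟩⟩
  exact ⟨fun p hp x y h => h.pMean_le_of_le_two hp, fun p hp x y h => h.pMean_le_of_two_le hp⟩
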